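/- Let $k \in \mathbb{N}$ be even and $h \in \mathbb{Z}$ with $\gcd(h,k) = 1$. Then the Hardy sum $s_2(h,k) = \sum_{a=0}^{k-1} (-1)^a ((a/k))((ah/k))$ satisfies $s_2(h,k) = -\frac{1}{4k} \sum_{1 \le a \le k-1, a \ne k/2} \tan(\pi a h/k) \cot(\pi a/k)$. -/

import Mathlib

/-!
On `ZMod k` the sawtooth `f x = ((x / k))` has discrete Fourier transform
`𝓕 f n = (i / 2) cot (π n / k)`, by summing `∑ b z ^ b` over a root of unity `z ≠ 1`.
For even `k` the sign `(-1) ^ a` is the character `e(-(k/2) a / k)`, so expanding `((a h / k))` by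
Fourier inversion gives `s₂(h, k) = k⁻¹ ∑ₙ 𝓕 f n · 𝓕 f (k/2 - h n)`; and
`𝓕 f (k/2 - h n) = (i / 2) cot (π / 2 - π h n / k) = (i / 2) tan (π h n / k)`.
The terms `n = 0` and `n = k/2` vanish since `tan 0 = cot (π / 2) = 0`.
-/

open scoped Classical

/-- The sawtooth function `((x))`. -/
noncomputable def saw (x : ℝ) : ℝ :=
  if ∃ m : ℤ, x = m then 0 else Int.fract x - 1 / 2

/-- The cotangent function. -/
noncomputable def cot (x : ℝ) : ℝ := Real.cos x / Real.sin x

open Finset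

open Complex (I exp)

open scoped Real

lemma saw_add_intCast (x : ℝ) (m : ℤ) : saw (x + m) = saw x := by
  have hint : (∃ n : ℤ, x + m = n) ↔ ∃ n : ℤ, x = n :=
    ⟨fun ⟨n, hn⟩ => ⟨n - m, by push_cast; linarith⟩,
      fun ⟨n, hn⟩ => ⟨n + m, by push_cast; rw [hn]⟩⟩
  simp only [saw, hint, Int.fract_add_intCast]

lemma saw_zero : saw 0 = 0 := if_pos ⟨0, Int.cast_zero.symm⟩

lemma saw_natCast_div_of_lt {k b : ℕ} (hb : 0 < b) (hbk : b < k) :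
    saw (b / k) = b / k - 1 / 2 := by
  have hk : (0 : ℝ) < k := by exact_mod_cast hb.trans hbk
  have hpos : 0 < (b : ℝ) / k := by positivity
  have hlt : (b : ℝ) / k < 1 := (div_lt_one hk).2 (by exact_mod_cast hbk)
  rw [saw, if_neg, Int.fract_eq_self.2 ⟨hpos.le, hlt⟩]
  rintro ⟨m, hm⟩
  rw [hm] at hpos hlt
  have : (0 : ℤ) < m := by exact_mod_cast hpos
  have : m < (1 : ℤ) := by exact_mod_cast hlt
  omega

lemma sub_one_mul_sum_range_mul_pow {R : Type*} [CommRing R] (z : R) (n : ℕ) :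
    (z - 1) * ∑ b ∈ range n, (b : R) * z ^ b
      = ((n : R) - 1) * z ^ n - ∑ b ∈ range n, z ^ b + 1 := by
  induction n with
  | zero => simp
  | succ n ih =>
    rw [sum_range_succ, sum_range_succ, mul_add, ih]
    push_cast
    ring

lemma sum_range_mul_pow_of_pow_eq_one {K : Type*} [Field K] {k : ℕ} {z : K} (hz : z ≠ 1)
    (hzk : z ^ k = 1) :
    ∑ b ∈ range k, (b : K) * z ^ b = k / (z - 1) := by
  have hz' : z - 1 ≠ 0 := sub_ne_zero.2 hz
  rw [eq_div_iff hz', mul_comm, sub_one_mul_sum_range_mul_pow, hzk, geom_sum_eq hz, hzk]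
  ring

lemma sum_range_saw_mul_pow {k : ℕ} (hk : 0 < k) (z : ℂ) :
    ∑ b ∈ range k, (saw (b / k) : ℂ) * z ^ b
      = ∑ b ∈ range k, ((b : ℂ) / k - 1 / 2) * z ^ b + 1 / 2 := by
  obtain ⟨m, rfl⟩ := Nat.exists_eq_add_one_of_ne_zero hk.ne'
  have hsaw : ∀ b ∈ range m,
      (saw ((b + 1 : ℕ) / (m + 1 : ℕ)) : ℂ) = (b + 1 : ℕ) / (m + 1 : ℕ) - 1 / 2 := fun b hb => by
    rw [saw_natCast_div_of_lt b.succ_pos (by simpa using hb)]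
    push_cast
    ring
  rw [sum_range_succ', sum_range_succ' (fun b => ((b : ℂ) / _ - 1 / 2) * z ^ b),
    sum_congr rfl fun b hb => by rw [hsaw b hb], Nat.cast_zero, zero_div, saw_zero]
  push_cast
  ring

lemma sum_range_saw_div (k : ℕ) : ∑ b ∈ range k, saw (b / k) = 0 := by
  rcases Nat.eq_zero_or_pos k with rfl | hk
  · simp
  have hgauss : (∑ b ∈ range k, (b : ℂ)) * 2 = k * (k - 1) := by
    have := congrArg (Nat.cast : ℕ → ℂ) (sum_range_id_mul_two k)
    push_cast [Nat.cast_sub hk] at this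
    exact this
  have hk' : (k : ℂ) ≠ 0 := by exact_mod_cast hk.ne'
  have hsum := sum_range_saw_mul_pow hk 1
  simp only [one_pow, mul_one, sum_sub_distrib, ← sum_div, sum_const, card_range,
    nsmul_eq_mul] at hsum
  apply Complex.ofReal_injective
  push_cast
  rw [hsum]
  field_simp
  linear_combination hgauss

lemma sum_range_saw_mul_pow_of_pow_eq_one {k : ℕ} (hk : 0 < k) {z : ℂ} (hz : z ≠ 1)
    (hzk : z ^ k = 1) :
    ∑ b ∈ range k, (saw (b / k) : ℂ) * z ^ b = (z + 1) / (z - 1) / 2 := by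
  have hk' : (k : ℂ) ≠ 0 := by exact_mod_cast hk.ne'
  have hz' : z - 1 ≠ 0 := sub_ne_zero.2 hz
  have hsplit : ∑ b ∈ range k, ((b : ℂ) / k - 1 / 2) * z ^ b
      = (∑ b ∈ range k, (b : ℂ) * z ^ b) / k - (∑ b ∈ range k, z ^ b) / 2 := by
    simp only [sub_mul, sum_sub_distrib, div_mul_eq_mul_div, one_mul, sum_div]
  rw [sum_range_saw_mul_pow hk, hsplit, sum_range_mul_pow_of_pow_eq_one hz hzk,
    geom_sum_eq hz, hzk]
  field_simp
  ring

lemma cot_eq_inv_tan (x : ℝ) : cot x = (Real.tan x)⁻¹ := by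
  rw [cot, Real.tan_eq_sin_div_cos, inv_div]

lemma cot_add_int_mul_pi (x : ℝ) (n : ℤ) : cot (x + n * π) = cot x := by
  rw [cot_eq_inv_tan, cot_eq_inv_tan, Real.tan_add_int_mul_pi]

lemma cot_pi_div_two_sub (x : ℝ) : cot (π / 2 - x) = Real.tan x := by
  rw [cot_eq_inv_tan, Real.tan_pi_div_two_sub, inv_inv]

lemma I_mul_cot_eq_exp_ratio (θ : ℝ) :
    I * cot θ = (exp (-2 * I * θ) + 1) / (exp (-2 * I * θ) - 1) := by
  have hcot : (cot θ : ℂ) = -Complex.cot (-θ) := by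
    rw [Complex.cot_eq_cos_div_sin, Complex.cos_neg, Complex.sin_neg, div_neg, neg_neg, cot]
    push_cast; rfl
  rw [hcot, Complex.cot_eq_exp_ratio, mul_neg, ← mul_div_assoc,
    mul_div_mul_left _ _ Complex.I_ne_zero, ← div_neg, neg_sub]
  ring_nf

open ZMod in
lemma sum_stdAddChar_mul_mul_eq_sum_dft_mul_dft {N : ℕ} [NeZero N] (Φ : ZMod N → ℂ) (c h : ZMod N) :
    ∑ x, stdAddChar (-(c * x)) * Φ x * Φ (h * x)
      = (N : ℂ)⁻¹ * ∑ n, 𝓕 Φ n * 𝓕 Φ (c - h * n) := by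
  have hinv : ∀ x, Φ (h * x) = (N : ℂ)⁻¹ * ∑ n, stdAddChar (n * (h * x)) * 𝓕 Φ n := fun x => by
    simpa only [smul_eq_mul] using (congrFun (dft.symm_apply_apply Φ) (h * x)).symm.trans
      (invDFT_apply _ _)
  calc ∑ x, stdAddChar (-(c * x)) * Φ x * Φ (h * x)
      = ∑ x, ∑ n, (N : ℂ)⁻¹ * (𝓕 Φ n * (stdAddChar (-(x * (c - h * n))) * Φ x)) := by
        refine sum_congr rfl fun x _ => ?_
        rw [hinv, mul_sum, mul_sum]
        refine sum_congr rfl fun n _ => ?_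
        have hchar : stdAddChar (-(x * (c - h * n)))
            = stdAddChar (-(c * x)) * stdAddChar (n * (h * x)) := by
          rw [← AddChar.map_add_eq_mul]
          ring_nf
        rw [hchar]
        ring
    _ = (N : ℂ)⁻¹ * ∑ n, 𝓕 Φ n * 𝓕 Φ (c - h * n) := by
        simp only [sum_comm (γ := ZMod N), ← mul_sum, dft_apply, smul_eq_mul]

lemma sum_Icc_filter_ne_half_eq_sum_range {M : Type*} [AddCommMonoid M] (k : ℕ) {g : ℕ → M}
    (h0 : g 0 = 0) (hhalf : g (k / 2) = 0) :
    ∑ n ∈ (Icc 1 (k - 1)).filter (fun n => n ≠ k / 2), g n = ∑ n ∈ range k, g n := by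
  refine sum_subset (fun n hn => ?_) fun n hn hnS => ?_
  · simp only [mem_filter, mem_Icc] at hn
    simp only [mem_range]
    omega
  · simp only [mem_filter, mem_Icc, not_and, not_not, mem_range] at hn hnS
    obtain rfl | rfl : n = 0 ∨ n = k / 2 := by
      by_cases hn0 : n = 0
      · exact .inl hn0
      · exact .inr (hnS ⟨by omega, by omega⟩)
    exacts [h0, hhalf]

section ZModSaw

open ZMod

variable {k : ℕ} [NeZero k]

lemma val_intCast_div (y : ℤ) : ((y : ZMod k).val : ℝ) / k = y / k - ((y / k : ℤ) : ℝ) := by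
  have hk : (k : ℝ) ≠ 0 := NeZero.ne _
  have hval : (((y : ZMod k).val : ℤ) : ℝ) = ((y - k * (y / k) : ℤ) : ℝ) := by
    rw [ZMod.val_intCast, Int.emod_def]
  push_cast at hval
  rw [hval]
  field_simp

lemma saw_val_intCast_div (y : ℤ) : saw ((y : ZMod k).val / k) = saw (y / k) := by
  rw [val_intCast_div, sub_eq_add_neg, ← Int.cast_neg, saw_add_intCast]

lemma cot_pi_mul_val_intCast_div (y : ℤ) :
    cot (π * (y : ZMod k).val / k) = cot (π * y / k) := by
  rw [mul_div_assoc, val_intCast_div, ← cot_add_int_mul_pi _ (y / k : ℤ)]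
  ring_nf

lemma sum_zmod_val_eq_sum_range {M : Type*} [AddCommMonoid M] (g : ℕ → M) :
    ∑ x : ZMod k, g x.val = ∑ n ∈ range k, g n := by
  obtain ⟨m, rfl⟩ := Nat.exists_eq_add_one_of_ne_zero (NeZero.ne k)
  exact Fin.sum_univ_eq_sum_range g (m + 1)

variable (k) in
noncomputable def sawMod (x : ZMod k) : ℂ := saw (x.val / k)

lemma dft_sawMod (n : ZMod k) : 𝓕 (sawMod k) n = I / 2 * cot (π * n.val / k) := by
  have hpow : ∀ x : ZMod k, stdAddChar (-(x * n)) = stdAddChar (-n) ^ x.val := fun x => by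
    rw [← AddChar.map_nsmul_eq_pow, nsmul_eq_mul, natCast_zmod_val, mul_neg]
  have hsum : 𝓕 (sawMod k) n = ∑ b ∈ range k, (saw (b / k) : ℂ) * stdAddChar (-n) ^ b := by
    rw [dft_apply, ← sum_zmod_val_eq_sum_range (fun b => (saw (b / k) : ℂ) * stdAddChar (-n) ^ b)]
    exact sum_congr rfl fun x _ => by rw [hpow, smul_eq_mul, mul_comm, sawMod]
  rcases eq_or_ne n 0 with rfl | hn
  -- Both sides vanish at `n = 0`, the right one because `cot 0 = 1 / 0 = 0`.
  · simp [hsum, cot, ← Complex.ofReal_sum, sum_range_saw_div]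
  have hz : stdAddChar (-n) ≠ 1 := by
    rw [← (stdAddChar (N := k)).map_zero_eq_one, injective_stdAddChar.ne_iff, neg_ne_zero]
    exact hn
  have hzk : stdAddChar (-n) ^ k = 1 := by
    rw [← AddChar.map_nsmul_eq_pow, nsmul_eq_mul, natCast_self, zero_mul, AddChar.map_zero_eq_one]
  have hexp : stdAddChar (-n) = exp (-2 * I * ↑(π * n.val / k)) := by
    have hneg : -n = ((-(n.val : ℤ) : ℤ) : ZMod k) := by simp
    rw [hneg, stdAddChar_coe]
    push_cast
    ring_nf
  rw [hsum, sum_range_saw_mul_pow_of_pow_eq_one (Nat.pos_of_ne_zero (NeZero.ne k)) hz hzk, hexp,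
    ← I_mul_cot_eq_exp_ratio]
  ring

variable {j : ℕ}

lemma stdAddChar_neg_half_mul (hkj : k = 2 * j) (x : ZMod k) :
    stdAddChar (-((j : ZMod k) * x)) = (-1) ^ x.val := by
  have hmul : -((j : ZMod k) * x) = x.val • ((-(j : ℤ) : ℤ) : ZMod k) := by
    rw [nsmul_eq_mul, natCast_zmod_val]
    push_cast
    ring
  have harg : 2 * π * I * ((-(j : ℤ) : ℤ) : ℂ) / k = -(π * I) := by
    rw [div_eq_iff (NeZero.ne _), show (k : ℂ) = 2 * j by exact_mod_cast hkj]
    push_cast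
    ring
  rw [hmul, AddChar.map_nsmul_eq_pow, stdAddChar_coe, harg, Complex.exp_neg, Complex.exp_pi_mul_I]
  norm_num

lemma sawMod_intCast_mul (h : ℤ) (x : ZMod k) : sawMod k (h * x) = saw (x.val * h / k) := by
  have hcast : (h * x : ZMod k) = ((x.val * h : ℤ) : ZMod k) := by
    push_cast
    rw [natCast_zmod_val, mul_comm]
  rw [sawMod, hcast, saw_val_intCast_div]
  push_cast
  rfl

lemma dft_sawMod_mul_dft_sawMod_half_sub (hkj : k = 2 * j) (h : ℤ) (x : ZMod k) :
    𝓕 (sawMod k) x * 𝓕 (sawMod k) (j - h * x)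
      = -(1 / 4) * (Real.tan (π * x.val * h / k) * cot (π * x.val / k) : ℝ) := by
  have hcast : ((j : ZMod k) - h * x) = ((j - h * x.val : ℤ) : ZMod k) := by
    push_cast
    rw [natCast_zmod_val]
  have harg : π * ((j - h * x.val : ℤ) : ℝ) / k = π / 2 - π * x.val * h / k := by
    rw [eq_sub_iff_add_eq, ← add_div, div_eq_iff (NeZero.ne _),
      show (k : ℝ) = 2 * j by exact_mod_cast hkj]
    push_cast
    ring
  rw [dft_sawMod, dft_sawMod, hcast, cot_pi_mul_val_intCast_div, harg, cot_pi_div_two_sub,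
    Complex.ofReal_mul]
  ring_nf
  rw [Complex.I_sq]
  ring

end ZModSaw

open ZMod in
theorem hardy_s2_general (k : ℕ) (hk : 0 < k) (hke : Even k) (h : ℤ) :
    ∑ a ∈ Finset.range k, (-1 : ℝ) ^ a * saw ((a : ℝ) / k) * saw (a * (h : ℝ) / k)
      = -(1 / (4 * k)) *
          ∑ a ∈ (Finset.Icc 1 (k - 1)).filter (fun a => a ≠ k / 2),
            Real.tan (Real.pi * a * (h : ℝ) / k) * cot (Real.pi * a / k) := by
  have : NeZero k := ⟨hk.ne'⟩
  have hkj : k = 2 * (k / 2) := (Nat.two_mul_div_two_of_even hke).symm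
  have hhalf : cot (π * (k / 2 : ℕ) / k) = 0 := by
    rw [show π * (k / 2 : ℕ) / k = π / 2 by
      rw [div_eq_iff (NeZero.ne _), show (k : ℝ) = 2 * (k / 2 : ℕ) by exact_mod_cast hkj]
      ring]
    simp [cot]
  apply Complex.ofReal_injective
  calc _ = ∑ x : ZMod k, stdAddChar (-(((k / 2 : ℕ) : ZMod k) * x)) * sawMod k x
          * sawMod k (h * x) := by
        push_cast
        rw [← sum_zmod_val_eq_sum_range]
        simp only [stdAddChar_neg_half_mul hkj, sawMod_intCast_mul]
        rfl
    _ = (k : ℂ)⁻¹ * ∑ x : ZMod k, 𝓕 (sawMod k) x * 𝓕 (sawMod k) ((k / 2 : ℕ) - h * x) :=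
        sum_stdAddChar_mul_mul_eq_sum_dft_mul_dft _ _ _
    _ = _ := by
        rw [sum_congr rfl fun x _ => dft_sawMod_mul_dft_sawMod_half_sub hkj h x, ← mul_sum,
          sum_zmod_val_eq_sum_range
            (fun n => ((Real.tan (π * n * h / k) * cot (π * n / k) : ℝ) : ℂ)),
          ← sum_Icc_filter_ne_half_eq_sum_range k (by simp) (by simp [hhalf])]
        push_cast
        ring

theorem hardy_s2 (k : ℕ) (hk : 0 < k) (hke : Even k) (h : ℤ) (hco : Int.gcd h k = 1) :
    ∑ a ∈ Finset.range k, (-1 : ℝ) ^ a * saw ((a : ℝ) / k) * saw (a * (h : ℝ) / k)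
      = -(1 / (4 * k)) *
          ∑ a ∈ (Finset.Icc 1 (k - 1)).filter (fun a => a ≠ k / 2),
            Real.tan (Real.pi * a * (h : ℝ) / k) * cot (Real.pi * a / k) :=
  hardy_s2_general k hk hke h
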